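/- Discretization of Gaussian coherent-state ensembles: let μ be a mean-zero complex Gaussian measure of variance E' on ℂ, and for grid spacing ε > 0 let Δ_L be the points of a square grid of spacing ε restricted to the disk {α : |α|² ≤ 1/ε}, with p(c) ∝ μ(□_c) (the measure of the grid cell □_c around c). Then as ε → 0: (a) ‖∑_{c∈Δ_L} p(c)|c⟩⟨c| − ∫|α⟩⟨α| dμ(α)‖_1 → 0, and (b) max_{c∈Δ_L} max_{α∈□_c} ‖ |c⟩⟨c| − |α⟩⟨α| ‖_1 → 0. -/

import Mathlib

open MeasureTheory ProbabilityTheory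
open scoped Classical NNReal

/-- Mean-zero complex Gaussian measure on `ℂ` with `E|z|² = v` (each real quadrature is a
real Gaussian of variance `v/2`). -/
noncomputable def gaussC (v : ℝ≥0) : Measure ℂ :=
  Measure.map (fun p : ℝ × ℝ => (⟨p.1, p.2⟩ : ℂ))
    ((gaussianReal 0 (v / 2)).prod (gaussianReal 0 (v / 2)))

/-- The half-open square grid cell `□_c` of side `ε` around the grid point `c`. -/
def gridCell (ε : ℝ) (c : ℂ) : Set ℂ :=
  {z : ℂ | -ε / 2 < (c - z).re ∧ (c - z).re ≤ ε / 2 ∧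
           -ε / 2 < (c - z).im ∧ (c - z).im ≤ ε / 2}

/-- The points of a square grid of spacing `ε` restricted to the disk `{α : |α|² ≤ 1/ε}`. -/
noncomputable def grid (ε : ℝ) : Finset ℂ :=
  (((Finset.Icc (-⌈ε⁻¹ ^ 2⌉) ⌈ε⁻¹ ^ 2⌉) ×ˢ (Finset.Icc (-⌈ε⁻¹ ^ 2⌉) ⌈ε⁻¹ ^ 2⌉)).image
      (fun p : ℤ × ℤ => (ε * p.1 + ε * p.2 * Complex.I : ℂ))).filter
    (fun c => ‖c‖ ^ 2 ≤ ε⁻¹)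

/-- The discretized ensemble weight `p(c) ∝ μ(□_c)`. -/
noncomputable def gridProb (μ : Measure ℂ) (ε : ℝ) (c : ℂ) : ℝ :=
  (μ (gridCell ε c)).toReal / ∑ c' ∈ grid ε, (μ (gridCell ε c')).toReal

/-! The grid cells are pairwise disjoint, have diameter at most `ε`, and for small `ε` cover any
fixed ball, so the mass of `μ` they miss tends to `0`. The trace distance `2√(1 - e^{-x²})` is at
most `2x` and at most `2`, so `α ↦ |α⟩⟨α|` is `2`-Lipschitz and bounded by some `B`. Replacing the
integrand by its value at the centre of each cell costs at most `2ε`; renormalising the cell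
weights and discarding the uncovered region each cost at most `B` times the missed mass. -/

open Filter Topology Metric

section Partition

variable {X ι V : Type*} [MeasurableSpace X] [NormedAddCommGroup V] [NormedSpace ℝ V]

lemma norm_inv_smul_sub_self_le {S : V} {N B : ℝ} (hN : 0 ≤ N) (hB : 0 ≤ B)
    (hS : ‖S‖ ≤ N * B) : ‖N⁻¹ • S - S‖ ≤ |1 - N| * B := by
  rcases hN.eq_or_lt with rfl | hN
  · simpa using (show ‖S‖ ≤ 0 by simpa using hS).trans hB
  calc ‖N⁻¹ • S - S‖ = ‖(N⁻¹ - 1) • S‖ := by rw [sub_smul, one_smul]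
    _ = |N⁻¹ - 1| * ‖S‖ := by rw [norm_smul, Real.norm_eq_abs]
    _ ≤ |N⁻¹ - 1| * (N * B) := by gcongr
    _ = |1 - N| * B := by
      rw [← mul_assoc, ← abs_of_pos hN, ← abs_mul, abs_of_pos hN, sub_mul, inv_mul_cancel₀ hN.ne',
        one_mul, abs_sub_comm]

variable [CompleteSpace V] {μ : Measure X} {f : X → V}

lemma norm_measureReal_smul_sub_setIntegral_le [IsFiniteMeasure μ] {A : Set X} {x : X} {ω : ℝ}
    (hf : IntegrableOn f A μ) (hω : ∀ y ∈ A, ‖f x - f y‖ ≤ ω) :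
    ‖μ.real A • f x - ∫ y in A, f y ∂μ‖ ≤ ω * μ.real A := by
  have hconst : IntegrableOn (fun _ => f x) A μ := integrableOn_const
  rw [← setIntegral_const, ← integral_sub hconst hf]
  exact norm_setIntegral_le_of_norm_le_const (measure_lt_top μ A) hω

lemma norm_sum_measureReal_smul_sub_setIntegral_biUnion_le [IsFiniteMeasure μ]
    (hf : Integrable f μ) {s : Finset ι} {A : ι → Set X} (hA : ∀ i ∈ s, MeasurableSet (A i))
    (hAd : (s : Set ι).PairwiseDisjoint A) {x : ι → X} {ω : ℝ}
    (hω : ∀ i ∈ s, ∀ y ∈ A i, ‖f (x i) - f y‖ ≤ ω) :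
    ‖∑ i ∈ s, μ.real (A i) • f (x i) - ∫ y in ⋃ i ∈ s, A i, f y ∂μ‖
      ≤ ω * μ.real (⋃ i ∈ s, A i) := by
  rw [integral_biUnion_finset s hA hAd (fun i _ => hf.integrableOn), ← Finset.sum_sub_distrib,
    measureReal_biUnion_finset hAd hA, Finset.mul_sum]
  exact (norm_sum_le _ _).trans <| Finset.sum_le_sum fun i hi =>
    norm_measureReal_smul_sub_setIntegral_le hf.integrableOn (hω i hi)

theorem norm_sum_normalized_smul_sub_integral_le [IsProbabilityMeasure μ] (hf : Integrable f μ)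
    {B : ℝ} (hB : ∀ y, ‖f y‖ ≤ B) {s : Finset ι} {A : ι → Set X}
    (hA : ∀ i ∈ s, MeasurableSet (A i)) (hAd : (s : Set ι).PairwiseDisjoint A) {x : ι → X}
    {ω : ℝ} (hω₀ : 0 ≤ ω) (hω : ∀ i ∈ s, ∀ y ∈ A i, ‖f (x i) - f y‖ ≤ ω) :
    ‖∑ i ∈ s, (μ.real (A i) / ∑ j ∈ s, μ.real (A j)) • f (x i) - ∫ y, f y ∂μ‖
      ≤ 2 * B * μ.real (⋃ i ∈ s, A i)ᶜ + ω := by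
  set U := ⋃ i ∈ s, A i
  set S := ∑ i ∈ s, μ.real (A i) • f (x i)
  have hU : MeasurableSet U := Finset.measurableSet_biUnion s hA
  have hN : ∑ j ∈ s, μ.real (A j) = μ.real U := (measureReal_biUnion_finset hAd hA).symm
  have hB₀ : 0 ≤ B := (norm_nonneg _).trans (hB (nonempty_of_isProbabilityMeasure μ).some)
  have hS : ‖S‖ ≤ μ.real U * B := by
    rw [← hN, Finset.sum_mul]
    refine (norm_sum_le _ _).trans (Finset.sum_le_sum fun i _ => ?_)
    rw [norm_smul, Real.norm_of_nonneg measureReal_nonneg]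
    exact mul_le_mul_of_nonneg_left (hB _) measureReal_nonneg
  have hsum : ∑ i ∈ s, (μ.real (A i) / ∑ j ∈ s, μ.real (A j)) • f (x i) = (μ.real U)⁻¹ • S := by
    simp only [hN, S, Finset.smul_sum, smul_smul, div_eq_inv_mul]
  have hcompl : 1 - μ.real U = μ.real Uᶜ := (probReal_compl_eq_one_sub hU).symm
  rw [hsum, ← integral_add_compl hU hf]
  calc ‖(μ.real U)⁻¹ • S - (∫ y in U, f y ∂μ + ∫ y in Uᶜ, f y ∂μ)‖
      ≤ ‖(μ.real U)⁻¹ • S - S‖ + ‖S - ∫ y in U, f y ∂μ‖ + ‖∫ y in Uᶜ, f y ∂μ‖ := by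
        rw [show (μ.real U)⁻¹ • S - (∫ y in U, f y ∂μ + ∫ y in Uᶜ, f y ∂μ)
          = ((μ.real U)⁻¹ • S - S) + (S - ∫ y in U, f y ∂μ) - ∫ y in Uᶜ, f y ∂μ by abel]
        exact (norm_sub_le _ _).trans (by gcongr; exact norm_add_le _ _)
    _ ≤ |1 - μ.real U| * B + ω * μ.real U + B * μ.real Uᶜ := by
        gcongr
        · exact norm_inv_smul_sub_self_le measureReal_nonneg hB₀ hS
        · exact norm_sum_measureReal_smul_sub_setIntegral_biUnion_le hf hA hAd hω
        · exact norm_setIntegral_le_of_norm_le_const (measure_lt_top _ _) fun y _ => hB y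
    _ ≤ 2 * B * μ.real Uᶜ + ω := by
        have hωU : ω * μ.real U ≤ ω := mul_le_of_le_one_right hω₀ measureReal_le_one
        rw [hcompl, abs_of_nonneg measureReal_nonneg]
        linarith

end Partition

section Grid

lemma floor_div_add_half_eq_iff {ε u : ℝ} (hε : 0 < ε) {j : ℤ} :
    ⌊u / ε + 1 / 2⌋ = j ↔ -ε / 2 < ε * j - u ∧ ε * j - u ≤ ε / 2 := by
  have h : ε * (u / ε + 1 / 2) = u + ε / 2 := by field_simp
  rw [Int.floor_eq_iff, ← mul_le_mul_iff_of_pos_left hε, ← mul_lt_mul_iff_of_pos_left hε, h]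
  constructor <;> rintro ⟨h₁, h₂⟩ <;> constructor <;> linarith

lemma mem_gridCell_lattice_iff {ε : ℝ} (hε : 0 < ε) {j k : ℤ} {z : ℂ} :
    z ∈ gridCell ε (ε * j + ε * k * Complex.I) ↔
      ⌊z.re / ε + 1 / 2⌋ = j ∧ ⌊z.im / ε + 1 / 2⌋ = k := by
  have hre : (ε * j + ε * k * Complex.I : ℂ).re = ε * j := by simp
  have him : (ε * j + ε * k * Complex.I : ℂ).im = ε * k := by simp
  simp only [floor_div_add_half_eq_iff hε, gridCell, Set.mem_ofPred_eq, Complex.sub_re,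
    Complex.sub_im, hre, him, and_assoc]

lemma mem_Icc_ceil_of_abs_mul_le {ε : ℝ} (hε : 0 < ε) {j : ℤ} (hj : |ε * j| ≤ ε⁻¹) :
    j ∈ Finset.Icc (-⌈ε⁻¹ ^ 2⌉) ⌈ε⁻¹ ^ 2⌉ := by
  have hj' : ((|j| : ℤ) : ℝ) ≤ ε⁻¹ ^ 2 := by
    rw [abs_mul, abs_of_pos hε, ← le_div_iff₀' hε] at hj
    rw [Int.cast_abs, sq, ← div_eq_inv_mul]
    exact hj
  rw [Finset.mem_Icc, ← abs_le]
  exact Int.cast_le.1 (hj'.trans (Int.le_ceil _))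

lemma exists_int_of_mem_grid {ε : ℝ} {c : ℂ} (hc : c ∈ grid ε) :
    ∃ j k : ℤ, (j, k) ∈ Finset.Icc (-⌈ε⁻¹ ^ 2⌉) ⌈ε⁻¹ ^ 2⌉ ×ˢ Finset.Icc (-⌈ε⁻¹ ^ 2⌉) ⌈ε⁻¹ ^ 2⌉ ∧
      c = ε * j + ε * k * Complex.I := by
  simp only [grid, Finset.mem_filter, Finset.mem_image] at hc
  obtain ⟨⟨⟨j, k⟩, hjk, rfl⟩, -⟩ := hc
  exact ⟨j, k, hjk, rfl⟩

lemma gridCell_pairwiseDisjoint {ε : ℝ} (hε : 0 < ε) :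
    (grid ε : Set ℂ).PairwiseDisjoint (gridCell ε) := by
  intro c hc c' hc' hne
  obtain ⟨j, k, -, rfl⟩ := exists_int_of_mem_grid hc
  obtain ⟨j', k', -, rfl⟩ := exists_int_of_mem_grid hc'
  refine Set.disjoint_left.2 fun z hz hz' => hne ?_
  rw [mem_gridCell_lattice_iff hε] at hz hz'
  rw [← hz.1, ← hz.2, ← hz'.1, ← hz'.2]

lemma measurableSet_gridCell (ε : ℝ) (c : ℂ) : MeasurableSet (gridCell ε c) := by
  have hre : Measurable fun z : ℂ => (c - z).re := by fun_prop
  have him : Measurable fun z : ℂ => (c - z).im := by fun_prop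
  exact (measurableSet_lt measurable_const hre).inter <| (measurableSet_le hre measurable_const).inter
    <| (measurableSet_lt measurable_const him).inter (measurableSet_le him measurable_const)

lemma norm_sub_le_of_mem_gridCell {ε : ℝ} {c z : ℂ} (hz : z ∈ gridCell ε c) : ‖c - z‖ ≤ ε := by
  obtain ⟨h₁, h₂, h₃, h₄⟩ := hz
  calc ‖c - z‖ ≤ |(c - z).re| + |(c - z).im| := Complex.norm_le_abs_re_add_abs_im _
    _ ≤ ε / 2 + ε / 2 := add_le_add (abs_le.2 ⟨by linarith, h₂⟩) (abs_le.2 ⟨by linarith, h₄⟩)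
    _ = ε := add_halves ε

lemma closedBall_subset_iUnion_gridCell {ε R : ℝ} (hε : 0 < ε) (hR : 0 ≤ R)
    (hRε : (R + 1) ^ 2 ≤ ε⁻¹) : closedBall 0 R ⊆ ⋃ c ∈ grid ε, gridCell ε c := by
  intro z hz
  rw [mem_closedBall_zero_iff] at hz
  set j := ⌊z.re / ε + 1 / 2⌋
  set k := ⌊z.im / ε + 1 / 2⌋
  set c : ℂ := ε * j + ε * k * Complex.I
  have hzc : z ∈ gridCell ε c := (mem_gridCell_lattice_iff hε).2 ⟨rfl, rfl⟩
  have hR₁ : R + 1 ≤ (R + 1) ^ 2 := by nlinarith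
  have hε₁ : ε ≤ 1 := (one_le_inv₀ hε).1 (by nlinarith)
  have hc : ‖c‖ ≤ R + 1 :=
    (norm_le_insert' c z).trans (add_le_add hz ((norm_sub_le_of_mem_gridCell hzc).trans hε₁))
  have hcε : ‖c‖ ≤ ε⁻¹ := by linarith
  have hjk : (j, k) ∈ Finset.Icc (-⌈ε⁻¹ ^ 2⌉) ⌈ε⁻¹ ^ 2⌉ ×ˢ Finset.Icc (-⌈ε⁻¹ ^ 2⌉) ⌈ε⁻¹ ^ 2⌉ := by
    refine Finset.mem_product.2 ⟨mem_Icc_ceil_of_abs_mul_le hε ?_, mem_Icc_ceil_of_abs_mul_le hε ?_⟩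
    · simpa [c] using (Complex.abs_re_le_norm c).trans hcε
    · simpa [c] using (Complex.abs_im_le_norm c).trans hcε
  have hcgrid : c ∈ grid ε :=
    Finset.mem_filter.2 ⟨Finset.mem_image.2 ⟨(j, k), hjk, rfl⟩, by nlinarith [norm_nonneg c]⟩
  exact Set.mem_biUnion hcgrid hzc

lemma tendsto_measure_compl_iUnion_gridCell (μ : Measure ℂ) [IsFiniteMeasure μ] :
    Tendsto (fun ε => μ (⋃ c ∈ grid ε, gridCell ε c)ᶜ) (𝓝[>] 0) (𝓝 0) := by
  have hball : Tendsto (fun R : ℝ => μ (closedBall 0 R)ᶜ) atTop (𝓝 0) := by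
    simpa using tendsto_measure_compl_closedBall_of_isTightMeasureSet
      (isTightMeasureSet_singleton (μ := μ)) 0
  rw [ENNReal.tendsto_nhds_zero] at hball ⊢
  intro η hη
  obtain ⟨R, hR, hR₀⟩ := ((hball η hη).and (eventually_ge_atTop 0)).exists
  have hsmall : ∀ᶠ ε in 𝓝[>] (0 : ℝ), (R + 1) ^ 2 ≤ ε⁻¹ :=
    tendsto_inv_nhdsGT_zero.eventually_ge_atTop _
  filter_upwards [hsmall, self_mem_nhdsWithin] with ε hRε hε
  exact (measure_mono (Set.compl_subset_compl.2
    (closedBall_subset_iUnion_gridCell hε hR₀ hRε))).trans hR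

end Grid

theorem tendsto_norm_sum_gridProb_smul_sub_integral {V : Type*} [NormedAddCommGroup V]
    [NormedSpace ℝ V] [CompleteSpace V] {μ : Measure ℂ} [IsProbabilityMeasure μ] {f : ℂ → V}
    {K : ℝ≥0} (hf : LipschitzWith K f) {B : ℝ} (hB : ∀ z, ‖f z‖ ≤ B) :
    Tendsto (fun ε => ‖∑ c ∈ grid ε, gridProb μ ε c • f c - ∫ z, f z ∂μ‖) (𝓝[>] 0) (𝓝 0) := by
  have hfi : Integrable f μ :=
    .of_bound hf.continuous.aestronglyMeasurable B (.of_forall hB)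
  have hbound : ∀ ε > 0, ‖∑ c ∈ grid ε, gridProb μ ε c • f c - ∫ z, f z ∂μ‖
      ≤ 2 * B * μ.real (⋃ c ∈ grid ε, gridCell ε c)ᶜ + K * ε := fun ε hε =>
    norm_sum_normalized_smul_sub_integral_le hfi hB (fun c _ => measurableSet_gridCell ε c)
      (gridCell_pairwiseDisjoint hε) (by positivity) fun c _ z hz =>
        (hf.norm_sub_le c z).trans (by gcongr; exact norm_sub_le_of_mem_gridCell hz)
  have hlim : Tendsto (fun ε => 2 * B * μ.real (⋃ c ∈ grid ε, gridCell ε c)ᶜ + K * ε)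
      (𝓝[>] 0) (𝓝 0) := by
    have hcompl := (ENNReal.tendsto_toReal ENNReal.zero_ne_top).comp
      (tendsto_measure_compl_iUnion_gridCell μ)
    have hε : Tendsto (fun ε : ℝ => ε) (𝓝[>] 0) (𝓝 0) := nhdsWithin_le_nhds
    simpa [measureReal_def] using (hcompl.const_mul (2 * B)).add (hε.const_mul (K : ℝ))
  exact squeeze_zero' (.of_forall fun ε => norm_nonneg _)
    (eventually_nhdsWithin_of_forall hbound) hlim

lemma sqrt_one_sub_exp_neg_sq_le_abs (x : ℝ) : √(1 - Real.exp (-x ^ 2)) ≤ |x| := by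
  rw [← Real.sqrt_sq_eq_abs]
  exact Real.sqrt_le_sqrt (by linarith [Real.add_one_le_exp (-x ^ 2)])

lemma sqrt_one_sub_exp_neg_le_one (t : ℝ) : √(1 - Real.exp (-t)) ≤ 1 :=
  Real.sqrt_le_one.2 (by linarith [Real.exp_pos (-t)])

instance isProbabilityMeasure_gaussC (v : ℝ≥0) : IsProbabilityMeasure (gaussC v) :=
  Measure.isProbabilityMeasure_map Complex.measurableEquivRealProd.symm.measurable.aemeasurable

theorem gaussian_ensemble_discretization_general {V : Type*} [NormedAddCommGroup V]
    [NormedSpace ℝ V] [CompleteSpace V]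
    (coh : ℂ → V)  -- `coh α` represents the trace-class operator `|α⟩⟨α|`
    (hcoh_dist : ∀ α β : ℂ, ‖coh α - coh β‖ =
      2 * Real.sqrt (1 - Real.exp (-(‖α - β‖) ^ 2)))
    (E' : ℝ≥0) :
    Filter.Tendsto (fun ε : ℝ =>
        ‖(∑ c ∈ grid ε, gridProb (gaussC E') ε c • coh c) - ∫ α, coh α ∂(gaussC E')‖)
      (nhdsWithin 0 (Set.Ioi 0)) (nhds 0) ∧
    ∀ δ : ℝ, 0 < δ → ∃ ε₀ > 0, ∀ ε : ℝ, 0 < ε → ε < ε₀ →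
      ∀ c ∈ grid ε, ∀ α ∈ gridCell ε c, ‖coh c - coh α‖ < δ := by
  have hlip : LipschitzWith 2 coh := .of_dist_le_mul fun α β => by
    rw [dist_eq_norm, dist_eq_norm, hcoh_dist, NNReal.coe_ofNat]
    gcongr
    exact (sqrt_one_sub_exp_neg_sq_le_abs _).trans_eq (abs_norm _)
  have hB : ∀ α, ‖coh α‖ ≤ ‖coh 0‖ + 2 := fun α => by
    have hsqrt := sqrt_one_sub_exp_neg_le_one (‖α - 0‖ ^ 2)
    linarith [norm_le_insert' (coh α) (coh 0), hcoh_dist α 0]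
  refine ⟨tendsto_norm_sum_gridProb_smul_sub_integral hlip hB,
    fun δ hδ => ⟨δ / 2, by positivity, fun ε _ hεδ c _ α hα => ?_⟩⟩
  calc ‖coh c - coh α‖ ≤ 2 * ‖c - α‖ := by simpa using hlip.norm_sub_le c α
    _ ≤ 2 * ε := by gcongr; exact norm_sub_le_of_mem_gridCell hα
    _ < δ := by linarith

/-- discretization of Gaussian coherent-state ensembles. As the grid
spacing `ε → 0⁺`: (a) the discretized ensemble average converges in trace norm to the
Gaussian coherent-state average, and (b) the trace distance between the coherent state
at a grid point and the one at any point of its cell tends to `0` uniformly. -/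
theorem gaussian_ensemble_discretization {V : Type*} [NormedAddCommGroup V]
    [NormedSpace ℝ V] [CompleteSpace V]
    (coh : ℂ → V)  -- `coh α` represents the trace-class operator `|α⟩⟨α|`
    (hcoh_dist : ∀ α β : ℂ, ‖coh α - coh β‖ =
      2 * Real.sqrt (1 - Real.exp (-(‖α - β‖) ^ 2)))
    (E' : ℝ≥0)
    (hcoh_int : Integrable coh (gaussC E')) :
    Filter.Tendsto (fun ε : ℝ =>
        ‖(∑ c ∈ grid ε, gridProb (gaussC E') ε c • coh c) - ∫ α, coh α ∂(gaussC E')‖)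
      (nhdsWithin 0 (Set.Ioi 0)) (nhds 0) ∧
    ∀ δ : ℝ, 0 < δ → ∃ ε₀ > 0, ∀ ε : ℝ, 0 < ε → ε < ε₀ →
      ∀ c ∈ grid ε, ∀ α ∈ gridCell ε c, ‖coh c - coh α‖ < δ :=
  gaussian_ensemble_discretization_general coh hcoh_dist E'
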